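/- The forward-lifted TSP-optimality cut x(A(P)) + x(∪_{h=1}^{p-1} Δ⁺_h(P)) ≤ |A(P)| - 1 is valid for every feasible solution of F-CVRP-TSP, where Δ⁺_h(P) = Δ^{E,+}_h(P) ∪ Δ^{TSP,+}_h(P) ∪ Δ^{Q,+}_h(P), and P is any TSP-violating path with no depot as intermediate node. -/

import Mathlib

/-!
Group the arcs counted on the left-hand side by their tail: for `h = 1, …, p - 1` the path arc
`(v h, v (h + 1))` together with `Δ⁺_h`. Each group carries flow at most one: for `h ≥ 2` because
the customer `v h` is left exactly once, and for `h = 1` because no arc of `Δ⁺_1` can be used by a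
feasible route while the customer `v 2` is entered exactly once.

If every group carried positive flow, induction along the path would place all of `P` on a single
route: the route through `v h` leaves it along a used arc of the group, and an arc of `Δ⁺_h` would
make that route repeat a customer, exceed the capacity, or contain a TSP-violating subpath. A
route containing the TSP-violating path `P` is not TSP-optimal, so some group has flow zero and
the left-hand side is at most `p - 2`.
-/

variable {V : Type*}

/-- The list of arcs (consecutive node pairs) of a node list. -/
def arcsOf (l : List V) : List (V × V) := l.zip l.tail

/-- The length of a path given as a node list: the sum of its arc distances. -/
def plen (d : V → V → ℝ) (l : List V) : ℝ :=
  ((arcsOf l).map (fun a => d a.1 a.2)).sum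

/-- A path is TSP-violating if some path on the same node set with
the same endpoints is strictly shorter. -/
def TSPviolating (d : V → V → ℝ) (P : List V) : Prop :=
  ∃ Q : List V, Q.Perm P ∧ Q.head? = P.head? ∧ Q.getLast? = P.getLast? ∧
    plen d Q < plen d P

/-- Length of the route visiting customers `c` in order,
starting and ending at the depot. -/
def routeLen (d : V → V → ℝ) (depot : V) (c : List V) : ℝ :=
  plen d (depot :: c ++ [depot])

/-- A route (given by its ordered customer list) is TSP-optimal:
no reordering of its customers gives a strictly shorter route. -/
def TSPopt (d : V → V → ℝ) (depot : V) (c : List V) : Prop :=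
  ∀ c' : List V, c'.Perm c → routeLen d depot c ≤ routeLen d depot c'

/-- Arc flow of a set of selected routes: the number of selected routes using arc `a`. -/
def flow [DecidableEq V] (depot : V) (routes : List (List V)) (a : V × V) : ℤ :=
  (routes.map (fun c => ((arcsOf (depot :: c ++ [depot])).count a : ℤ))).sum

/-- The node list `[v 1, …, v p]` of an indexed path. -/
def pathList (v : ℕ → V) (p : ℕ) : List V := (List.range p).map (fun i => v (i + 1))

/-- Forward elementarity lifting set `Δ^{E,+}_h(P)`. -/
def deltaE (depot : V) (v : ℕ → V) (h : ℕ) : Set (V × V) :=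
  {a | ∃ j, 1 ≤ j ∧ j ≤ h - 1 ∧ a = (v h, v j) ∧ v j ≠ depot}

/-- Forward TSP-optimality lifting set `Δ^{TSP,+}_h(P)`. -/
def deltaTSP (d : V → V → ℝ) (v : ℕ → V) (h : ℕ) : Set (V × V) :=
  {a | ∃ j : V, (∀ i, 1 ≤ i → i ≤ h + 1 → j ≠ v i) ∧ a = (v h, j) ∧
    TSPviolating d (pathList v h ++ [j])}

/-- Forward capacity lifting set `Δ^{Q,+}_h(P)`. -/
def deltaQ (dem : V → ℝ) (Qcap : ℝ) (v : ℕ → V) (h : ℕ) : Set (V × V) :=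
  {a | ∃ j : V, (∀ i, 1 ≤ i → i ≤ h + 1 → j ≠ v i) ∧ a = (v h, j) ∧
    Qcap < (∑ i ∈ Finset.Icc 1 h, dem (v i)) + dem j}

theorem List.infix_append_pair_of_count_eq_one {α : Type*} [DecidableEq α] {l s : List α}
    {x y : α} (hs : s ++ [x] <:+: l) (hxy : [x, y] <:+: l) (hx : l.count x = 1) :
    s ++ [x, y] <:+: l := by
  obtain ⟨u, w, rfl⟩ := hs
  obtain ⟨u', w', hl'⟩ := hxy
  simp only [List.count_append, List.count_singleton_self] at hx
  have hsplit : (u ++ s) ++ x :: w = u' ++ x :: y :: w' := by simpa using hl'.symm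
  have hxus : x ∉ u ++ s := List.count_eq_zero.mp (by rw [List.count_append]; omega)
  have hxw : x ∉ w := List.count_eq_zero.mp (by omega)
  obtain ⟨-, -, rfl⟩ := (List.append_cons_inj_of_notMem hxus hxw).mp hsplit
  exact ⟨u, w', by simp⟩

theorem List.add_le_sum_map_of_ne {β M : Type*} [AddCommMonoid M] [PartialOrder M]
    [IsOrderedAddMonoid M] {l : List β} {f : β → M} (hf : ∀ x ∈ l, 0 ≤ f x) {a b : β}
    (ha : a ∈ l) (hb : b ∈ l) (hab : a ≠ b) : f a + f b ≤ (l.map f).sum := by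
  classical
  rw [(List.Perm.map f (List.perm_cons_erase ha)).sum_eq, List.map_cons, List.sum_cons]
  gcongr
  refine List.single_le_sum (fun x hx => ?_) _ (List.mem_map_of_mem ?_)
  · obtain ⟨y, hy, rfl⟩ := List.mem_map.mp hx
    exact hf y (List.mem_of_mem_erase hy)
  · exact (List.mem_erase_of_ne hab.symm).mpr hb

theorem List.sum_count_le_count_map {α β : Type*} [BEq α] [LawfulBEq α] [DecidableEq β]
    (l : List α) {S : Finset α} {f : α → β} {b : β} (hS : ∀ a ∈ S, f a = b) :
    ∑ a ∈ S, l.count a ≤ (l.map f).count b := by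
  classical
  induction l with
  | nil => simp
  | cons x l ih =>
    simp only [List.count_cons, List.map_cons, Finset.sum_add_distrib, beq_iff_eq,
      Finset.sum_ite_eq]
    gcongr
    split_ifs with hx hfx <;> simp_all

theorem finsum_mem_biUnion_of_finite_support {ι α M : Type*} [AddCommMonoid M] {f : α → M}
    (hf : (Function.support f).Finite) {I : Set ι} {t : ι → Set α} (hI : I.Finite)
    (ht : I.PairwiseDisjoint t) : ∑ᶠ a ∈ ⋃ i ∈ I, t i, f a = ∑ᶠ i ∈ I, ∑ᶠ a ∈ t i, f a := by
  rw [← finsum_mem_inter_support, Set.iUnion₂_inter,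
    finsum_mem_biUnion (ht.mono fun _ => Set.inter_subset_left) hI
      fun _ _ => hf.subset Set.inter_subset_right]
  simp_rw [finsum_mem_inter_support]

theorem Finset.sum_le_card_sub_one {ι : Type*} {s : Finset ι} {f : ι → ℤ}
    (hf : ∀ i ∈ s, f i ≤ 1) {j : ι} (hj : j ∈ s) (hfj : f j ≤ 0) :
    ∑ i ∈ s, f i ≤ s.card - 1 := by
  classical
  rw [← Finset.add_sum_erase s f hj]
  have := Finset.sum_le_card_nsmul (s.erase j) f 1 fun i hi => hf i (Finset.mem_of_mem_erase hi)
  rw [Finset.card_erase_of_mem hj, nsmul_eq_mul, mul_one,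
    Nat.cast_sub (Finset.card_pos.mpr ⟨j, hj⟩), Nat.cast_one] at this
  linarith

@[simp] theorem arcsOf_cons_cons (a b : V) (l : List V) :
    arcsOf (a :: b :: l) = (a, b) :: arcsOf (b :: l) := rfl

theorem map_fst_arcsOf (l : List V) : (arcsOf l).map Prod.fst = l.dropLast := by
  induction l with
  | nil => rfl
  | cons a t ih => cases t with
    | nil => rfl
    | cons b t => simp [ih]

theorem map_snd_arcsOf (l : List V) : (arcsOf l).map Prod.snd = l.tail :=
  List.map_snd_zip (by simp)

theorem mem_arcsOf_iff_infix {x y : V} {l : List V} : (x, y) ∈ arcsOf l ↔ [x, y] <:+: l := by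
  induction l with
  | nil => simp [arcsOf]
  | cons a t ih => cases t with
    | nil => simp [arcsOf, List.infix_cons_iff]
    | cons b t =>
      rw [arcsOf_cons_cons, List.mem_cons, ih, List.infix_cons_iff (l₂ := b :: t)]
      simp [and_comm]

theorem arcsOf_append_cons (l₁ l₂ : List V) (a : V) :
    arcsOf (l₁ ++ a :: l₂) = arcsOf (l₁ ++ [a]) ++ arcsOf (a :: l₂) := by
  induction l₁ with
  | nil => rfl
  | cons b t ih => cases t with
    | nil => rfl
    | cons c t =>
      simp only [List.cons_append, arcsOf_cons_cons] at ih ⊢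
      rw [ih]

theorem plen_append_cons (d : V → V → ℝ) (l₁ l₂ : List V) (a : V) :
    plen d (l₁ ++ a :: l₂) = plen d (l₁ ++ [a]) + plen d (a :: l₂) := by
  rw [plen, arcsOf_append_cons, List.map_append, List.sum_append, plen, plen]

theorem plen_append_append (d : V → V → ℝ) (l₁ s l₂ : List V) {x y : V}
    (hx : s.head? = some x) (hy : s.getLast? = some y) :
    plen d (l₁ ++ s ++ l₂) = plen d (l₁ ++ [x]) + plen d s + plen d (y :: l₂) := by
  have hxs : plen d (l₁ ++ s ++ l₂) = plen d (l₁ ++ [x]) + plen d (s ++ l₂) := by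
    obtain ⟨s₁, rfl⟩ := List.head?_eq_some_iff.mp hx
    simpa using plen_append_cons d l₁ (s₁ ++ l₂) x
  have hsy : plen d (s ++ l₂) = plen d s + plen d (y :: l₂) := by
    obtain ⟨s₀, rfl⟩ := List.getLast?_eq_some_iff.mp hy
    simpa using plen_append_cons d s₀ l₂ y
  rw [hxs, hsy, add_assoc]

theorem TSPviolating.three_le_length {d : V → V → ℝ} {s : List V} (h : TSPviolating d s) :
    3 ≤ s.length := by
  obtain ⟨q, hperm, hh, hl, hlt⟩ := h
  by_contra! hs
  have hqs : q = s := by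
    match s, q, hperm.length_eq with
    | [], [], _ => rfl
    | [_], [_], _ => simpa using hh
    | [_, _], [_, _], _ => simp_all
  exact hlt.ne (hqs ▸ rfl)

theorem TSPviolating.of_infix {d : V → V → ℝ} {s l : List V} (hs : TSPviolating d s)
    (hsl : s <:+: l) : TSPviolating d l := by
  have hne : s ≠ [] := List.ne_nil_of_length_pos (by linarith [hs.three_le_length])
  obtain ⟨x, hx⟩ := Option.ne_none_iff_exists'.mp (mt List.head?_eq_none_iff.mp hne)
  obtain ⟨y, hy⟩ := Option.ne_none_iff_exists'.mp (mt List.getLast?_eq_none_iff.mp hne)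
  obtain ⟨q, hperm, hh, hl, hlt⟩ := hs
  obtain ⟨l₁, l₂, rfl⟩ := hsl
  refine ⟨l₁ ++ q ++ l₂, (hperm.append_left l₁).append_right l₂, by simp [hh], by simp [hl], ?_⟩
  rw [plen_append_append d l₁ q l₂ (hh.trans hx) (hl.trans hy), plen_append_append d l₁ s l₂ hx hy]
  linarith

theorem TSPopt.not_violating_tour {d : V → V → ℝ} {depot : V} {c : List V}
    (hc : TSPopt d depot c) : ¬ TSPviolating d (depot :: c ++ [depot]) := by
  rintro ⟨q, hperm, hh, hl, hlt⟩
  obtain ⟨r, rfl⟩ := List.head?_eq_some_iff.mp (by simpa using hh)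
  have hr : r.getLast? = some depot := by
    cases r with
    | nil => simpa using hperm.length_eq
    | cons b r => simpa [List.getLast?_cons] using hl
  obtain ⟨c', rfl⟩ := List.getLast?_eq_some_iff.mp hr
  have hc' : c'.Perm c := (List.perm_append_right_iff [depot]).mp hperm.cons_inv
  exact (hc c' hc').not_gt hlt

theorem TSPopt.not_violating_of_infix {d : V → V → ℝ} {depot : V} {c s : List V}
    (hc : TSPopt d depot c) (hs : s <:+: depot :: c ++ [depot]) : ¬ TSPviolating d s :=
  fun h => hc.not_violating_tour (h.of_infix hs)

structure FeasibleRoute (d : V → V → ℝ) (depot : V) (dem : V → ℝ) (Qcap : ℝ) (c : List V) :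
    Prop where
  nodup : c.Nodup
  sum_dem_le : (c.map dem).sum ≤ Qcap
  tspOpt : TSPopt d depot c

theorem sum_map_le_of_subset_tour {depot : V} {dem : V → ℝ} (hdem0 : dem depot = 0)
    (hdem : ∀ u, 0 ≤ dem u) {c L : List V} (hL : L.Nodup) (hLc : L ⊆ depot :: c ++ [depot]) :
    (L.map dem).sum ≤ (c.map dem).sum := by
  have hsub : L ⊆ depot :: c := fun x hx => by simpa [or_comm] using hLc hx
  obtain ⟨L', hperm, hsl⟩ := List.subperm_of_subset hL hsub
  calc (L.map dem).sum = (L'.map dem).sum := (hperm.map dem).sum_eq.symm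
    _ ≤ ((depot :: c).map dem).sum := (hsl.map dem).sum_le_sum (by simp [hdem])
    _ = (c.map dem).sum := by simp [hdem0]

section Flow

variable [DecidableEq V] {depot : V} {routes : List (List V)}

theorem count_tour {c : List V} {x : V} (hx : x ≠ depot) :
    (depot :: c ++ [depot]).count x = c.count x := by
  simp [hx.symm]

def CoversCustomersOnce (depot : V) (routes : List (List V)) : Prop :=
  ∀ u, u ≠ depot → (routes.map fun c => (c.count u : ℤ)).sum = 1

theorem CoversCustomersOnce.eq_of_mem (h : CoversCustomersOnce depot routes) {u : V}
    (hu : u ≠ depot) {c c' : List V} (hc : c ∈ routes) (hc' : c' ∈ routes) (huc : u ∈ c)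
    (huc' : u ∈ c') : c = c' := by
  by_contra hne
  have hsum := List.add_le_sum_map_of_ne (f := fun c => (c.count u : ℤ)) (by simp) hc hc' hne
  have := List.count_pos_iff.mpr huc
  have := List.count_pos_iff.mpr huc'
  rw [h u hu] at hsum
  omega

theorem exists_mem_arcsOf_of_flow_ne_zero {a : V × V} (ha : flow depot routes a ≠ 0) :
    ∃ c ∈ routes, a ∈ arcsOf (depot :: c ++ [depot]) := by
  contrapose! ha
  exact List.sum_eq_zero (by simpa [List.count_eq_zero] using ha)

theorem finite_support_flow : (Function.support (flow depot routes)).Finite :=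
  (routes.flatMap fun c => arcsOf (depot :: c ++ [depot])).finite_toSet.subset fun _ ha =>
    List.mem_flatMap.mpr (exists_mem_arcsOf_of_flow_ne_zero ha)

theorem sum_flow_le_sum_count {S : Finset (V × V)} {u : V}
    (h : ∀ c ∈ routes, ∑ a ∈ S, (arcsOf (depot :: c ++ [depot])).count a ≤ c.count u) :
    ∑ a ∈ S, flow depot routes a ≤ (routes.map fun c => (c.count u : ℤ)).sum := by
  induction routes with
  | nil => simp [flow]
  | cons c cs ih =>
    simp only [flow, List.map_cons, List.sum_cons, Finset.sum_add_distrib] at ih ⊢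
    gcongr
    · exact_mod_cast h c List.mem_cons_self
    · exact ih fun c' hc' => h c' (List.mem_cons_of_mem c hc')

theorem CoversCustomersOnce.sum_flow_le_one_of_fst_eq (h : CoversCustomersOnce depot routes)
    {u : V} (hu : u ≠ depot) {S : Finset (V × V)} (hS : ∀ a ∈ S, a.1 = u) :
    ∑ a ∈ S, flow depot routes a ≤ 1 := by
  refine (sum_flow_le_sum_count fun c _ => ?_).trans (h u hu).le
  refine (List.sum_count_le_count_map _ hS).trans_eq ?_
  rw [map_fst_arcsOf, List.cons_append, List.dropLast_cons_of_ne_nil (by simp),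
    List.dropLast_concat]
  simp [hu.symm]

theorem CoversCustomersOnce.flow_le_one (h : CoversCustomersOnce depot routes)
    {x y : V} (hy : y ≠ depot) : flow depot routes (x, y) ≤ 1 := by
  have hroute : ∀ c ∈ routes,
      ∑ a ∈ {(x, y)}, (arcsOf (depot :: c ++ [depot])).count a ≤ c.count y := fun c _ => by
    refine (List.sum_count_le_count_map _ (f := Prod.snd) (b := y) (by simp)).trans_eq ?_
    simp [map_snd_arcsOf, hy.symm]
  simpa using (sum_flow_le_sum_count hroute).trans (h y hy).le

theorem CoversCustomersOnce.finsum_mem_flow_le_one_of_fst_eq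
    (h : CoversCustomersOnce depot routes) {u : V} (hu : u ≠ depot) {S : Set (V × V)}
    (hS : ∀ a ∈ S, a.1 = u) : ∑ᶠ a ∈ S, flow depot routes a ≤ 1 := by
  have hfin := (finite_support_flow (depot := depot) (routes := routes)).subset
    (Set.inter_subset_right (s := S))
  rw [← finsum_mem_inter_support, finsum_mem_eq_finite_toFinset_sum _ hfin]
  exact h.sum_flow_le_one_of_fst_eq hu fun a ha => hS a ((Set.Finite.mem_toFinset _).mp ha).1

end Flow

section Path

variable {v : ℕ → V}

theorem pathList_succ (v : ℕ → V) (k : ℕ) :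
    pathList v (k + 1) = pathList v k ++ [v (k + 1)] := by
  simp [pathList, List.range_succ]

theorem mem_pathList_iff {k : ℕ} {x : V} :
    x ∈ pathList v k ↔ ∃ i, 1 ≤ i ∧ i ≤ k ∧ v i = x := by
  simp only [pathList, List.mem_map, List.mem_range]
  constructor
  · rintro ⟨i, hi, rfl⟩
    exact ⟨i + 1, by omega, by omega, rfl⟩
  · rintro ⟨i, hi1, hik, rfl⟩
    exact ⟨i - 1, by omega, by rw [Nat.sub_add_cancel hi1]⟩

theorem nodup_pathList {k : ℕ} (hinj : Set.InjOn v (Set.Icc 1 k)) : (pathList v k).Nodup :=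
  List.nodup_range.map_on fun i hi j hj hij => by
    simp only [List.mem_range] at hi hj
    have := hinj ⟨by omega, by omega⟩ ⟨by omega, by omega⟩ hij
    omega

theorem sum_map_pathList (f : V → ℝ) (k : ℕ) :
    ((pathList v k).map f).sum = ∑ i ∈ Finset.Icc 1 k, f (v i) := by
  induction k with
  | zero => simp [pathList]
  | succ k ih =>
    rw [pathList_succ, List.map_append, List.sum_append, ih, Finset.sum_Icc_succ_top (by omega)]
    simp

end Path

section Lifting

variable {d : V → V → ℝ} {depot : V} {dem : V → ℝ} {Qcap : ℝ} {v : ℕ → V} {p : ℕ}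

def deltaPlus (d : V → V → ℝ) (depot : V) (dem : V → ℝ) (Qcap : ℝ) (v : ℕ → V) (h : ℕ) :
    Set (V × V) :=
  deltaE depot v h ∪ deltaTSP d v h ∪ deltaQ dem Qcap v h

def liftedArcs (d : V → V → ℝ) (depot : V) (dem : V → ℝ) (Qcap : ℝ) (v : ℕ → V) (h : ℕ) :
    Set (V × V) :=
  insert (v h, v (h + 1)) (deltaPlus d depot dem Qcap v h)

theorem fst_of_mem_deltaPlus {h : ℕ} {a : V × V} (ha : a ∈ deltaPlus d depot dem Qcap v h) :
    a.1 = v h := by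
  rcases ha with (⟨_, _, _, rfl, _⟩ | ⟨_, _, rfl, _⟩) | ⟨_, _, rfl, _⟩ <;> rfl

theorem fst_of_mem_liftedArcs {h : ℕ} {a : V × V} (ha : a ∈ liftedArcs d depot dem Qcap v h) :
    a.1 = v h := by
  rcases ha with rfl | ha
  · rfl
  · exact fst_of_mem_deltaPlus ha

theorem pathArc_notMem_deltaPlus {h : ℕ} (hinj : Set.InjOn v (Set.Icc 1 (h + 1))) :
    (v h, v (h + 1)) ∉ deltaPlus d depot dem Qcap v h := by
  rintro ((⟨j, hj1, hjh, hj, -⟩ | ⟨_, hne, hj, -⟩) | ⟨_, hne, hj, -⟩)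
  · have := hinj ⟨by omega, le_rfl⟩ ⟨hj1, by omega⟩ (Prod.ext_iff.mp hj).2
    omega
  all_goals exact hne (h + 1) (by omega) le_rfl (Prod.ext_iff.mp hj).2.symm

theorem FeasibleRoute.not_infix_of_mem_deltaPlus [DecidableEq V] {c : List V}
    (hc : FeasibleRoute d depot dem Qcap c) (hdem0 : dem depot = 0) (hdem : ∀ u, 0 ≤ dem u)
    {h : ℕ} (hinj : Set.InjOn v (Set.Icc 1 h)) {w : V}
    (hw : (v h, w) ∈ deltaPlus d depot dem Qcap v h) :
    ¬ pathList v h ++ [w] <:+: depot :: c ++ [depot] := by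
  intro hinf
  rcases hw with (⟨j, hj1, hjh, hj, hjd⟩ | ⟨j, -, hj, hviol⟩) | ⟨j, hjv, hj, hover⟩
  all_goals simp only [Prod.mk.injEq, true_and] at hj; subst w
  · have htwice : 2 ≤ (pathList v h ++ [v j]).count (v j) := by
      have : 0 < (pathList v h).count (v j) :=
        List.count_pos_iff.mpr (mem_pathList_iff.mpr ⟨j, hj1, by omega, rfl⟩)
      simp only [List.count_append, List.count_singleton_self]
      omega
    have honce : (depot :: c ++ [depot]).count (v j) ≤ 1 := by
      rw [count_tour hjd]
      exact List.nodup_iff_count_le_one.mp hc.nodup _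
    have := hinf.sublist.count_le (v j)
    omega
  · exact hc.tspOpt.not_violating_of_infix hinf hviol
  · refine hover.not_ge ?_
    have hnodup : (pathList v h ++ [j]).Nodup := by
      refine (nodup_pathList hinj).append (List.nodup_singleton j) ?_
      intro x hx hxj
      obtain rfl := List.mem_singleton.mp hxj
      obtain ⟨i, hi1, hih, rfl⟩ := mem_pathList_iff.mp hx
      exact hjv i hi1 (by omega) rfl
    simpa [sum_map_pathList] using
      (sum_map_le_of_subset_tour hdem0 hdem hnodup hinf.subset).trans hc.sum_dem_le

theorem sum_add_finsum_deltaPlus_eq {M : Type*} [AddCommMonoid M] {f : V × V → M}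
    (hf : (Function.support f).Finite) (hinj : Set.InjOn v (Set.Icc 1 p)) :
    (∑ h ∈ Finset.Icc 1 (p - 1), f (v h, v (h + 1)))
        + ∑ᶠ a ∈ ⋃ h ∈ Set.Icc 1 (p - 1), deltaPlus d depot dem Qcap v h, f a
      = ∑ h ∈ Finset.Icc 1 (p - 1), ∑ᶠ a ∈ liftedArcs d depot dem Qcap v h, f a := by
  have hdisj : (Set.Icc 1 (p - 1)).PairwiseDisjoint (deltaPlus d depot dem Qcap v) :=
    fun i hi j hj hij => Set.disjoint_left.mpr fun a hai haj => hij <|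
      hinj ⟨hi.1, hi.2.trans (Nat.sub_le p 1)⟩ ⟨hj.1, hj.2.trans (Nat.sub_le p 1)⟩
        ((fst_of_mem_deltaPlus hai).symm.trans (fst_of_mem_deltaPlus haj))
  rw [finsum_mem_biUnion_of_finite_support hf (Set.finite_Icc _ _) hdisj, ← Finset.coe_Icc,
    finsum_mem_coe_finset, ← Finset.sum_add_distrib]
  refine Finset.sum_congr rfl fun h hh => ?_
  rw [Finset.mem_Icc] at hh
  rw [liftedArcs, finsum_mem_insert' f
    (pathArc_notMem_deltaPlus (hinj.mono (Set.Icc_subset_Icc_right (by omega))))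
    (hf.subset Set.inter_subset_right)]

end Lifting

section LiftedFlow

variable [DecidableEq V] {d : V → V → ℝ} {depot : V} {dem : V → ℝ} {Qcap : ℝ} {v : ℕ → V}
  {routes : List (List V)} {p : ℕ}

theorem infix_pathList_succ {c : List V} (hc : FeasibleRoute d depot dem Qcap c)
    (hdem0 : dem depot = 0) (hdem : ∀ u, 0 ≤ dem u) {k : ℕ} (hinj : Set.InjOn v (Set.Icc 1 k))
    {w : V} (hw : (v k, w) ∈ liftedArcs d depot dem Qcap v k)
    (hinf : pathList v k ++ [w] <:+: depot :: c ++ [depot]) :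
    pathList v (k + 1) <:+: depot :: c ++ [depot] := by
  rcases hw with hw | hw
  · obtain ⟨-, rfl⟩ := Prod.mk.inj hw
    rwa [pathList_succ]
  · exact absurd hinf (hc.not_infix_of_mem_deltaPlus hdem0 hdem hinj hw)

theorem flow_eq_zero_of_mem_deltaPlus_one
    (hfeas : ∀ c ∈ routes, FeasibleRoute d depot dem Qcap c) (hdem0 : dem depot = 0)
    (hdem : ∀ u, 0 ≤ dem u) {a : V × V}
    (ha : a ∈ deltaPlus d depot dem Qcap v 1) : flow depot routes a = 0 := by
  by_contra hfa
  obtain ⟨c, hc, hac⟩ := exists_mem_arcsOf_of_flow_ne_zero hfa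
  obtain ⟨x, w⟩ := a
  obtain rfl : x = v 1 := fst_of_mem_deltaPlus ha
  exact (hfeas c hc).not_infix_of_mem_deltaPlus hdem0 hdem
    ((Set.subsingleton_Icc_of_ge le_rfl).injOn v) ha (mem_arcsOf_iff_infix.mp hac)

theorem infix_append_of_mem_arcsOf (hcover : CoversCustomersOnce depot routes)
    (hfeas : ∀ c ∈ routes, FeasibleRoute d depot dem Qcap c) {k : ℕ} (hk : 1 ≤ k)
    (hvk : v k ≠ depot) {c c' : List V} (hc : c ∈ routes) (hc' : c' ∈ routes)
    (hinf : pathList v k <:+: depot :: c ++ [depot]) {w : V}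
    (harc : (v k, w) ∈ arcsOf (depot :: c' ++ [depot])) :
    pathList v k ++ [w] <:+: depot :: c ++ [depot] := by
  rw [mem_arcsOf_iff_infix] at harc
  have hmem : v k ∈ c := by
    simpa [hvk] using hinf.subset (mem_pathList_iff.mpr ⟨k, hk, le_rfl, rfl⟩)
  have hmem' : v k ∈ c' := by simpa [hvk] using harc.subset List.mem_cons_self
  obtain rfl : c = c' := hcover.eq_of_mem hvk hc hc' hmem hmem'
  have hsplit : pathList v k = pathList v (k - 1) ++ [v k] := by
    simpa [Nat.sub_add_cancel hk] using pathList_succ v (k - 1)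
  have hcount : (depot :: c ++ [depot]).count (v k) = 1 := by
    rw [count_tour hvk]
    exact List.count_eq_one_of_mem (hfeas c hc).nodup hmem
  rw [hsplit] at hinf ⊢
  simpa using List.infix_append_pair_of_count_eq_one hinf harc hcount

theorem exists_infix_tour_pathList (hcover : CoversCustomersOnce depot routes)
    (hfeas : ∀ c ∈ routes, FeasibleRoute d depot dem Qcap c) (hdem0 : dem depot = 0)
    (hdem : ∀ u, 0 ≤ dem u) (hinj : Set.InjOn v (Set.Icc 1 p))
    (hmid : ∀ i, 2 ≤ i → i ≤ p - 1 → v i ≠ depot)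
    (hflow : ∀ h, 1 ≤ h → h < p →
      ∃ a ∈ liftedArcs d depot dem Qcap v h, flow depot routes a ≠ 0)
    {k : ℕ} (hk : 2 ≤ k) (hkp : k ≤ p) :
    ∃ c ∈ routes, pathList v k <:+: depot :: c ++ [depot] := by
  induction k, hk using Nat.le_induction with
  | base =>
    obtain ⟨⟨x, w⟩, ha, hfa⟩ := hflow 1 le_rfl (by omega)
    obtain ⟨c, hc, hac⟩ := exists_mem_arcsOf_of_flow_ne_zero hfa
    obtain rfl : x = v 1 := fst_of_mem_liftedArcs ha
    exact ⟨c, hc, infix_pathList_succ (hfeas c hc) hdem0 hdem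
      ((Set.subsingleton_Icc_of_ge le_rfl).injOn v) ha (mem_arcsOf_iff_infix.mp hac)⟩
  | succ k hk ih =>
    obtain ⟨c, hc, hinf⟩ := ih (by omega)
    obtain ⟨⟨x, w⟩, ha, hfa⟩ := hflow k (by omega) (by omega)
    obtain ⟨c', hc', hac⟩ := exists_mem_arcsOf_of_flow_ne_zero hfa
    obtain rfl : x = v k := fst_of_mem_liftedArcs ha
    exact ⟨c, hc, infix_pathList_succ (hfeas c hc) hdem0 hdem
      (hinj.mono (Set.Icc_subset_Icc_right (by omega))) ha
      (infix_append_of_mem_arcsOf hcover hfeas (by omega) (hmid k hk (by omega)) hc hc' hinf hac)⟩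

theorem exists_flow_eq_zero_on_liftedArcs (hcover : CoversCustomersOnce depot routes)
    (hfeas : ∀ c ∈ routes, FeasibleRoute d depot dem Qcap c) (hdem0 : dem depot = 0)
    (hdem : ∀ u, 0 ≤ dem u) (hinj : Set.InjOn v (Set.Icc 1 p))
    (hmid : ∀ i, 2 ≤ i → i ≤ p - 1 → v i ≠ depot) (hp : 2 ≤ p)
    (hviol : TSPviolating d (pathList v p)) :
    ∃ h ∈ Finset.Icc 1 (p - 1),
      ∀ a ∈ liftedArcs d depot dem Qcap v h, flow depot routes a = 0 := by
  by_contra! hflow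
  obtain ⟨c, hc, hinf⟩ := exists_infix_tour_pathList hcover hfeas hdem0 hdem hinj hmid
    (fun h h1 hhp => hflow h (Finset.mem_Icc.mpr ⟨h1, by omega⟩)) hp le_rfl
  exact (hfeas c hc).tspOpt.not_violating_of_infix hinf hviol

theorem finsum_mem_liftedArcs_flow_le_one (hcover : CoversCustomersOnce depot routes)
    (hfeas : ∀ c ∈ routes, FeasibleRoute d depot dem Qcap c) (hdem0 : dem depot = 0)
    (hdem : ∀ u, 0 ≤ dem u) (hinj : Set.InjOn v (Set.Icc 1 p))
    (hmid : ∀ i, 2 ≤ i → i ≤ p - 1 → v i ≠ depot) (hp : 3 ≤ p) {h : ℕ}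
    (hh : h ∈ Finset.Icc 1 (p - 1)) :
    ∑ᶠ a ∈ liftedArcs d depot dem Qcap v h, flow depot routes a ≤ 1 := by
  rw [Finset.mem_Icc] at hh
  obtain rfl | h2 := hh.1.eq_or_lt
  · rw [liftedArcs, finsum_mem_insert' _
      (pathArc_notMem_deltaPlus (hinj.mono (Set.Icc_subset_Icc_right (by omega))))
      (finite_support_flow.subset Set.inter_subset_right),
      finsum_mem_eq_zero_of_forall_eq_zero fun a ha =>
        flow_eq_zero_of_mem_deltaPlus_one hfeas hdem0 hdem ha, add_zero]
    exact hcover.flow_le_one (hmid 2 le_rfl (by omega))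
  · exact hcover.finsum_mem_flow_le_one_of_fst_eq (hmid h h2 hh.2)
      fun a ha => fst_of_mem_liftedArcs ha

end LiftedFlow

theorem forward_lifted_cut_valid_general [DecidableEq V]
    (d : V → V → ℝ) (depot : V) (dem : V → ℝ) (Qcap : ℝ)
    (hdem0 : dem depot = 0) (hpos : ∀ u : V, u ≠ depot → 0 < dem u)
    (routes : List (List V))
    (hnd : ∀ c ∈ routes, c.Nodup)
    (hcap : ∀ c ∈ routes, (c.map dem).sum ≤ Qcap)
    (hcover : ∀ u : V, u ≠ depot → (routes.map (fun c => (c.count u : ℤ))).sum = 1)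
    (hopt : ∀ c ∈ routes, TSPopt d depot c)
    (p : ℕ) (v : ℕ → V)
    (hinj : ∀ i j, 1 ≤ i → i ≤ p → 1 ≤ j → j ≤ p → v i = v j → i = j)
    (hmid : ∀ i, 2 ≤ i → i ≤ p - 1 → v i ≠ depot)
    (hviol : TSPviolating d (pathList v p)) :
    (∑ h ∈ Finset.Icc 1 (p - 1), flow depot routes (v h, v (h + 1)))
      + (∑ᶠ a ∈ (⋃ h ∈ Set.Icc 1 (p - 1),
            (deltaE depot v h ∪ deltaTSP d v h ∪ deltaQ dem Qcap v h)),
          flow depot routes a)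
      ≤ (p : ℤ) - 2 := by
  have hp : 3 ≤ p := by simpa [pathList] using hviol.three_le_length
  have hinjOn : Set.InjOn v (Set.Icc 1 p) := fun i hi j hj => hinj i j hi.1 hi.2 hj.1 hj.2
  have hfeas : ∀ c ∈ routes, FeasibleRoute d depot dem Qcap c :=
    fun c hc => ⟨hnd c hc, hcap c hc, hopt c hc⟩
  have hdem : ∀ u, 0 ≤ dem u := fun u =>
    (eq_or_ne u depot).elim (fun hu => hu ▸ hdem0.ge) fun hu => (hpos u hu).le
  obtain ⟨h₀, hh₀, hzero⟩ := exists_flow_eq_zero_on_liftedArcs hcover hfeas hdem0 hdem hinjOn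
    hmid (by omega) hviol
  calc _ = ∑ h ∈ Finset.Icc 1 (p - 1), ∑ᶠ a ∈ liftedArcs d depot dem Qcap v h,
        flow depot routes a := sum_add_finsum_deltaPlus_eq finite_support_flow hinjOn
    _ ≤ (Finset.Icc 1 (p - 1)).card - 1 := Finset.sum_le_card_sub_one
        (fun h hh => finsum_mem_liftedArcs_flow_le_one hcover hfeas hdem0 hdem hinjOn hmid hp hh)
        hh₀ (finsum_mem_eq_zero_of_forall_eq_zero hzero).le
    _ = p - 2 := by rw [Nat.card_Icc]; omega

/-- the forward-lifted TSP-optimality cut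
`x(A(P)) + x(⋃_{h=1}^{p-1} Δ⁺_h(P)) ≤ |A(P)| - 1` is valid for every feasible
solution of F-CVRP-TSP, for every TSP-violating path `P` with no depot as
intermediate node. -/
theorem forward_lifted_cut_valid [DecidableEq V]
    (d : V → V → ℝ) (depot : V) (dem : V → ℝ) (Qcap : ℝ)
    (hdem0 : dem depot = 0) (hpos : ∀ u : V, u ≠ depot → 0 < dem u)
    (routes : List (List V))
    (hnd : ∀ c ∈ routes, c.Nodup) (hdep : ∀ c ∈ routes, depot ∉ c)
    (hne : ∀ c ∈ routes, c ≠ [])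
    (hcap : ∀ c ∈ routes, (c.map dem).sum ≤ Qcap)
    (hcover : ∀ u : V, u ≠ depot → (routes.map (fun c => (c.count u : ℤ))).sum = 1)
    (hopt : ∀ c ∈ routes, TSPopt d depot c)
    (p : ℕ) (hp : 2 ≤ p) (v : ℕ → V)
    (hinj : ∀ i j, 1 ≤ i → i ≤ p → 1 ≤ j → j ≤ p → v i = v j → i = j)
    (hmid : ∀ i, 2 ≤ i → i ≤ p - 1 → v i ≠ depot)
    (hviol : TSPviolating d (pathList v p)) :
    (∑ h ∈ Finset.Icc 1 (p - 1), flow depot routes (v h, v (h + 1)))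
      + (∑ᶠ a ∈ (⋃ h ∈ Set.Icc 1 (p - 1),
            (deltaE depot v h ∪ deltaTSP d v h ∪ deltaQ dem Qcap v h)),
          flow depot routes a)
      ≤ (p : ℤ) - 2 :=
  forward_lifted_cut_valid_general d depot dem Qcap hdem0 hpos routes hnd hcap hcover hopt p v hinj
    hmid hviol
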